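/- arXiv:2209.05108 — 3 statements merged into one kernel-verified Lean document; each statement's English description precedes it below -/
import Mathlib

section
/- Dominance preservation under the EFF rule: with the reserve-crew setup, let A and B be finite subsets of C (the crew still unassigned under two different policies), let t ∈ ℝ be the time of the current demand, and suppose (H1) A and B agree on crew whose shifts have not yet started: {c ∈ A : b(c) > t} = {c ∈ B : b(c) > t}, and (H2) for every u ≥ t, #{c ∈ A : b(c) ≤ u ≤ e(c)} ≥ #{c ∈ B : b(c) ≤ u ≤ e(c)}. Then: (i) if some b' ∈ B is on duty at t, there exists a member of A on duty at t; and (ii) for any b' ∈ B on duty at t and any a* ∈ A on duty at t with minimal end time e(a*) among all members of A on duty at t, it holds for every u ≥ t that #{c ∈ A \ {a*} : b(c) ≤ u ≤ e(c)} ≥ #{c ∈ B \ {b'} : b(c) ≤ u ≤ e(c)}. -/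
open Finset

/-- Dominance preservation under the EFF rule. `b c` and `e c` are the shift start
and end times of reserve crew member `c`; `c` is on duty at time `u` if
`b c ≤ u ≤ e c`. -/
theorem eff_dominance_preservation
    {C : Type*} [Fintype C] [DecidableEq C]
    (b e : C → ℝ) (hbe : ∀ c, b c ≤ e c)
    (A B : Finset C) (t : ℝ)
    (H1 : A.filter (fun c => t < b c) = B.filter (fun c => t < b c))
    (H2 : ∀ u : ℝ, t ≤ u →
      (B.filter (fun c => b c ≤ u ∧ u ≤ e c)).card ≤
      (A.filter (fun c => b c ≤ u ∧ u ≤ e c)).card) :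
    ((∃ b' ∈ B, b b' ≤ t ∧ t ≤ e b') → (∃ a ∈ A, b a ≤ t ∧ t ≤ e a)) ∧
    (∀ b' ∈ B, (b b' ≤ t ∧ t ≤ e b') →
      ∀ astar ∈ A, (b astar ≤ t ∧ t ≤ e astar) →
      (∀ a ∈ A, (b a ≤ t ∧ t ≤ e a) → e astar ≤ e a) →
      ∀ u : ℝ, t ≤ u →
        ((B.erase b').filter (fun c => b c ≤ u ∧ u ≤ e c)).card ≤
        ((A.erase astar).filter (fun c => b c ≤ u ∧ u ≤ e c)).card) := by
  have hmemH1 : ∀ c, (c ∈ A ∧ t < b c) ↔ (c ∈ B ∧ t < b c) := by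
    intro c
    constructor <;> intro h
    · have : c ∈ B.filter (fun c => t < b c) := by rw [← H1]; exact mem_filter.mpr h
      exact mem_filter.mp this
    · have : c ∈ A.filter (fun c => t < b c) := by rw [H1]; exact mem_filter.mpr h
      exact mem_filter.mp this
  constructor
  · rintro ⟨b', hb'B, hb'⟩
    have h := H2 t le_rfl
    have hne : 0 < (B.filter (fun c => b c ≤ t ∧ t ≤ e c)).card :=
      card_pos.mpr ⟨b', mem_filter.mpr ⟨hb'B, hb'⟩⟩
    obtain ⟨a, ha⟩ := card_pos.mp (lt_of_lt_of_le hne h)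
    exact ⟨a, (mem_filter.mp ha).1, (mem_filter.mp ha).2⟩
  · intro b' hb'B hb' astar haA hast hmin u hu
    -- split lemma
    have split : ∀ (X : Finset C) (w : ℝ),
        (X.filter (fun c => b c ≤ w ∧ w ≤ e c)).card =
        (X.filter (fun c => (b c ≤ w ∧ w ≤ e c) ∧ b c ≤ t)).card +
        (X.filter (fun c => (b c ≤ w ∧ w ≤ e c) ∧ ¬ b c ≤ t)).card := by
      intro X w
      have h := Finset.card_filter_add_card_filter_not
        (s := X.filter (fun c => b c ≤ w ∧ w ≤ e c)) (p := fun c => b c ≤ t)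
      simp only [Finset.filter_filter] at h
      omega
    have hQeq : ∀ w : ℝ,
        (A.filter (fun c => (b c ≤ w ∧ w ≤ e c) ∧ ¬ b c ≤ t)) =
        (B.filter (fun c => (b c ≤ w ∧ w ≤ e c) ∧ ¬ b c ≤ t)) := by
      intro w
      ext c
      simp only [mem_filter, not_le]
      constructor
      · rintro ⟨hc, hp, ht⟩
        exact ⟨((hmemH1 c).mp ⟨hc, ht⟩).1, hp, ht⟩
      · rintro ⟨hc, hp, ht⟩
        exact ⟨((hmemH1 c).mpr ⟨hc, ht⟩).1, hp, ht⟩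
    have hB1 : ((B.erase b').filter (fun c => b c ≤ u ∧ u ≤ e c)).card ≤
        (B.filter (fun c => b c ≤ u ∧ u ≤ e c)).card :=
      card_le_card (filter_subset_filter _ (erase_subset _ _))
    by_cases hau : u ≤ e astar
    · -- astar still on duty at u
      have hastar_mem : astar ∈ A.filter (fun c => b c ≤ u ∧ u ≤ e c) :=
        mem_filter.mpr ⟨haA, le_trans hast.1 hu, hau⟩
      have hAcard : ((A.erase astar).filter (fun c => b c ≤ u ∧ u ≤ e c)).card =
          (A.filter (fun c => b c ≤ u ∧ u ≤ e c)).card - 1 := by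
        rw [Finset.filter_erase, card_erase_of_mem hastar_mem]
      by_cases hbu : u ≤ e b'
      · -- b' still on duty at u
        have hb'mem : b' ∈ B.filter (fun c => b c ≤ u ∧ u ≤ e c) :=
          mem_filter.mpr ⟨hb'B, le_trans hb'.1 hu, hbu⟩
        have hBcard : ((B.erase b').filter (fun c => b c ≤ u ∧ u ≤ e c)).card =
            (B.filter (fun c => b c ≤ u ∧ u ≤ e c)).card - 1 := by
          rw [Finset.filter_erase, card_erase_of_mem hb'mem]
        have := H2 u hu
        omega
      · -- b' off duty at u : show strict inequality of full counts
        push_neg at hbu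
        -- P parts
        have hb'notPu : b' ∉ B.filter (fun c => (b c ≤ u ∧ u ≤ e c) ∧ b c ≤ t) := by
          simp only [mem_filter, not_and, not_le]
          intro _ h; linarith [h.2]
        have hb'Pt : b' ∈ B.filter (fun c => (b c ≤ t ∧ t ≤ e c) ∧ b c ≤ t) :=
          mem_filter.mpr ⟨hb'B, hb', hb'.1⟩
        have hins : insert b' (B.filter (fun c => (b c ≤ u ∧ u ≤ e c) ∧ b c ≤ t)) ⊆
            B.filter (fun c => (b c ≤ t ∧ t ≤ e c) ∧ b c ≤ t) := by
          intro c hc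
          rcases mem_insert.mp hc with rfl | hc
          · exact hb'Pt
          · obtain ⟨hcB, ⟨hbc, hec⟩, hbt⟩ := mem_filter.mp hc
            exact mem_filter.mpr ⟨hcB, ⟨hbt, le_trans hu hec⟩, hbt⟩
        have hBP : (B.filter (fun c => (b c ≤ u ∧ u ≤ e c) ∧ b c ≤ t)).card + 1 ≤
            (B.filter (fun c => (b c ≤ t ∧ t ≤ e c) ∧ b c ≤ t)).card := by
          have := card_le_card hins
          rwa [card_insert_of_notMem hb'notPu] at this
        have hAP : A.filter (fun c => (b c ≤ t ∧ t ≤ e c) ∧ b c ≤ t) ⊆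
            A.filter (fun c => (b c ≤ u ∧ u ≤ e c) ∧ b c ≤ t) := by
          intro c hc
          obtain ⟨hcA, ⟨hbc, hec⟩, hbt⟩ := mem_filter.mp hc
          have : e astar ≤ e c := hmin c hcA ⟨hbc, hec⟩
          exact mem_filter.mpr ⟨hcA, ⟨le_trans hbt hu, le_trans hau this⟩, hbt⟩
        have hAPc := card_le_card hAP
        -- compare P parts at t via H2 t
        have hsplitAt := split A t
        have hsplitBt := split B t
        have hsplitAu := split A u
        have hsplitBu := split B u
        have hQt : (A.filter (fun c => (b c ≤ t ∧ t ≤ e c) ∧ ¬ b c ≤ t)).card =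
            (B.filter (fun c => (b c ≤ t ∧ t ≤ e c) ∧ ¬ b c ≤ t)).card := by
          rw [hQeq t]
        have hQu : (A.filter (fun c => (b c ≤ u ∧ u ≤ e c) ∧ ¬ b c ≤ t)).card =
            (B.filter (fun c => (b c ≤ u ∧ u ≤ e c) ∧ ¬ b c ≤ t)).card := by
          rw [hQeq u]
        have hH2t := H2 t le_rfl
        omega
    · -- astar off duty at u
      push_neg at hau
      have hastar_not : astar ∉ A.filter (fun c => b c ≤ u ∧ u ≤ e c) := by
        simp only [mem_filter, not_and, not_le]
        intro _ _; exact hau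
      have hAcard : ((A.erase astar).filter (fun c => b c ≤ u ∧ u ≤ e c)).card =
          (A.filter (fun c => b c ≤ u ∧ u ≤ e c)).card := by
        rw [Finset.filter_erase, Finset.erase_eq_of_notMem hastar_not]
      have := H2 u hu
      omega
end

section
/- Proposition 1 (optimality of the EFF recovery policy, pathwise form): with the reserve-crew setup, let σ* be any recovery policy that follows the EFF rule and σ be any recovery policy. Then for every time u ∈ ℝ, N_{σ*}(u) ≥ N_{σ}(u); i.e., when maximizing the number of reserve crew available at any point in time, an Earliest-Finisher-First recovery policy is optimal. -/
/-!
Fix `u` and let `n` be the number of demands at or before `u`. A crew member on duty at `u` is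
unavailable exactly when it serves one of these `n` demands, so it suffices to show that, for every
threshold `θ` at or after the last of these demands, EFF has used at most as many crew members
ending at or after `θ` as `σ` has. This is kept by induction over the demands. The only delicate
step is when EFF picks `c⋆` and `σ` picks `c` with `e c < θ ≤ e c⋆`: then every crew member on
duty now and ending before `θ` has already been used by EFF, `c` among them, whereas `σ` had not
used `c`; comparing the counts at the current demand time gives the strict inequality that absorbs
`c⋆`.
-/

/-- Crew member `c` is on duty at time `u` iff `b c ≤ u ≤ e c`. -/
def OnDuty {C : Type*} (b e : C → ℝ) (c : C) (u : ℝ) : Prop :=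
  b c ≤ u ∧ u ≤ e c

/-- Crew member `c` is unassigned by `σ` to any demand `j < i`. -/
def UnassignedBefore {C : Type*} {m : ℕ} (σ : Fin m → Option C) (i : Fin m) (c : C) : Prop :=
  ∀ j : Fin m, j < i → σ j ≠ some c

/-- A recovery policy: (i) no crew member is assigned to two demands, (ii) assigned
crew members are on duty at the demand time, (iii) must-serve: a demand is left
unserved only if no crew member is on duty at its time and unassigned to an
earlier demand. -/
def IsPolicy {C : Type*} (b e : C → ℝ) {m : ℕ} (t : Fin m → ℝ)
    (σ : Fin m → Option C) : Prop :=
  (∀ i j : Fin m, ∀ c : C, σ i = some c → σ j = some c → i = j) ∧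
  (∀ i : Fin m, ∀ c : C, σ i = some c → OnDuty b e c (t i)) ∧
  (∀ i : Fin m, σ i = none → ¬ ∃ c : C, OnDuty b e c (t i) ∧ UnassignedBefore σ i c)

/-- The Earliest-Finisher-First rule: whenever some crew member is available
(on duty and unassigned to earlier demands), the policy assigns an available
crew member with minimal shift end time among all available crew members. -/
def FollowsEFF {C : Type*} (b e : C → ℝ) {m : ℕ} (t : Fin m → ℝ)
    (σ : Fin m → Option C) : Prop :=
  ∀ i : Fin m, (∃ c : C, OnDuty b e c (t i) ∧ UnassignedBefore σ i c) →
    ∃ c : C, σ i = some c ∧ OnDuty b e c (t i) ∧ UnassignedBefore σ i c ∧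
      ∀ c' : C, OnDuty b e c' (t i) → UnassignedBefore σ i c' → e c ≤ e c'

/-- `NAvail b e t σ u` is the number of reserve crew members available at time `u`
under policy `σ`: those on duty at `u` and not assigned to any demand at or before
time `u`. -/
noncomputable def NAvail {C : Type*} (b e : C → ℝ) {m : ℕ} (t : Fin m → ℝ)
    (σ : Fin m → Option C) (u : ℝ) : ℕ :=
  Set.ncard {c : C | OnDuty b e c u ∧ ∀ j : Fin m, σ j = some c → u < t j}

section

variable {C : Type*} {m : ℕ}

def assignedBefore (σ : Fin m → Option C) (n : ℕ) : Set C :=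
  {c | ∃ j : Fin m, (j : ℕ) < n ∧ σ j = some c}

theorem unassignedBefore_iff {σ : Fin m → Option C} {i : Fin m} {c : C} :
    UnassignedBefore σ i c ↔ c ∉ assignedBefore σ i :=
  ⟨fun h ⟨j, hj, hjc⟩ => h j hj hjc, fun h j hj hjc => h ⟨j, hj, hjc⟩⟩

theorem assignedBefore_zero (σ : Fin m → Option C) : assignedBefore σ 0 = ∅ := by
  simp [assignedBefore]

theorem assignedBefore_mono (σ : Fin m → Option C) : Monotone (assignedBefore σ) :=
  fun _ _ h _ ⟨j, hj, hjc⟩ => ⟨j, hj.trans_le h, hjc⟩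

theorem assignedBefore_succ {σ : Fin m → Option C} {n : ℕ} (hn : n < m) :
    assignedBefore σ (n + 1) = assignedBefore σ n ∪ {c | σ ⟨n, hn⟩ = some c} := by
  ext c
  constructor
  · rintro ⟨j, hj, hjc⟩
    rcases (Nat.lt_succ_iff_lt_or_eq.mp hj) with hj | rfl
    · exact Or.inl ⟨j, hj, hjc⟩
    · exact Or.inr hjc
  · rintro (⟨j, hj, hjc⟩ | hc)
    · exact ⟨j, hj.trans n.lt_succ_self, hjc⟩
    · exact ⟨⟨n, hn⟩, n.lt_succ_self, hc⟩

theorem assignedBefore_succ_of_eq_none {σ : Fin m → Option C} {n : ℕ} {hn : n < m}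
    (h : σ ⟨n, hn⟩ = none) : assignedBefore σ (n + 1) = assignedBefore σ n := by
  simp [assignedBefore_succ hn, h]

theorem assignedBefore_succ_of_eq_some {σ : Fin m → Option C} {n : ℕ} {hn : n < m} {c : C}
    (h : σ ⟨n, hn⟩ = some c) : assignedBefore σ (n + 1) = insert c (assignedBefore σ n) := by
  simp [assignedBefore_succ hn, h, Set.union_singleton]

section Counting

variable {α β : Type*} [LinearOrder β] (e : α → β)

theorem Set.sep_insert_of_lt {a : α} {A : Set α} {θ : β} (h : e a < θ) :
    {c ∈ insert a A | θ ≤ e c} = {c ∈ A | θ ≤ e c} := by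
  ext c
  simp only [Set.mem_ofPred_eq, Set.mem_insert_iff, or_and_right, or_iff_right_iff_imp,
    and_imp]
  rintro rfl hθ
  exact absurd h hθ.not_gt

variable [Finite α]

theorem Set.ncard_sep_insert_le (a : α) (A : Set α) (θ : β) :
    {c ∈ insert a A | θ ≤ e c}.ncard ≤ {c ∈ A | θ ≤ e c}.ncard + 1 := by
  refine (Set.ncard_le_ncard (t := insert a {c ∈ A | θ ≤ e c}) ?_).trans
    (Set.ncard_insert_le _ _)
  rintro c ⟨rfl | hc, hθ⟩
  exacts [Set.mem_insert _ _, Set.mem_insert_of_mem _ ⟨hc, hθ⟩]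

theorem Set.ncard_sep_insert_of_le {a : α} {A : Set α} {θ : β} (ha : a ∉ A) (h : θ ≤ e a) :
    {c ∈ insert a A | θ ≤ e c}.ncard = {c ∈ A | θ ≤ e c}.ncard + 1 := by
  have : {c ∈ insert a A | θ ≤ e c} = insert a {c ∈ A | θ ≤ e c} := by
    ext c
    simp only [Set.mem_ofPred_eq, Set.mem_insert_iff, or_and_right]
    exact or_congr_left (and_iff_left_of_imp fun hc => hc ▸ h)
  rw [this, Set.ncard_insert_of_notMem fun hA => ha hA.1]

theorem Set.ncard_sep_le_eq_add (A : Set α) {τ θ : β} (h : τ ≤ θ) :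
    {c ∈ A | τ ≤ e c}.ncard = {c ∈ A | θ ≤ e c}.ncard + {c ∈ A | τ ≤ e c ∧ e c < θ}.ncard := by
  rw [← Set.ncard_union_eq]
  · congr 1
    ext c
    simp only [Set.mem_ofPred_eq, Set.mem_union]
    constructor
    · rintro ⟨hA, hτ⟩
      exact (le_or_gt θ (e c)).imp (fun hθ => ⟨hA, hθ⟩) fun hθ => ⟨hA, hτ, hθ⟩
    · rintro (⟨hA, hθ⟩ | ⟨hA, hτ, -⟩)
      exacts [⟨hA, h.trans hθ⟩, ⟨hA, hτ⟩]
  · exact Set.disjoint_left.mpr fun c ⟨_, hθ⟩ ⟨_, _, hlt⟩ => hlt.not_ge hθ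

theorem Set.ncard_sep_lt_of_band_ssubset {A A' : Set α} {τ θ : β} (h : τ ≤ θ)
    (hle : {c ∈ A' | τ ≤ e c}.ncard ≤ {c ∈ A | τ ≤ e c}.ncard)
    (hband : {c ∈ A | τ ≤ e c ∧ e c < θ} ⊂ {c ∈ A' | τ ≤ e c ∧ e c < θ}) :
    {c ∈ A' | θ ≤ e c}.ncard < {c ∈ A | θ ≤ e c}.ncard := by
  rw [Set.ncard_sep_le_eq_add e A h, Set.ncard_sep_le_eq_add e A' h] at hle
  have := Set.ncard_lt_ncard hband
  omega

end Counting

variable {b e : C → ℝ} {t : Fin m → ℝ} {σ : Fin m → Option C}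

theorem IsPolicy.b_le_of_mem_assignedBefore (hσ : IsPolicy b e t σ) {n : ℕ} {c : C} {τ : ℝ}
    (hc : c ∈ assignedBefore σ n) (hτ : ∀ j : Fin m, (j : ℕ) < n → t j ≤ τ) : b c ≤ τ := by
  obtain ⟨j, hj, hjc⟩ := hc
  exact (hσ.2.1 j c hjc).1.trans (hτ j hj)

theorem IsPolicy.notMem_assignedBefore (hσ : IsPolicy b e t σ) {i : Fin m} {c : C}
    (h : σ i = some c) : c ∉ assignedBefore σ i := fun ⟨j, hj, hjc⟩ =>
  (Fin.ne_of_lt hj) (hσ.1 j i c hjc h)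

theorem IsPolicy.mem_assignedBefore_of_eq_none (hσ : IsPolicy b e t σ) {i : Fin m} {c : C}
    (h : σ i = none) (hc : OnDuty b e c (t i)) : c ∈ assignedBefore σ i := by
  by_contra hA
  exact hσ.2.2 i h ⟨c, hc, unassignedBefore_iff.mpr hA⟩

theorem FollowsEFF.mem_assignedBefore_of_lt (heff : FollowsEFF b e t σ) {i : Fin m}
    {c c' : C} (h : σ i = some c) (hc' : OnDuty b e c' (t i)) (hlt : e c' < e c) :
    c' ∈ assignedBefore σ i := by
  by_contra hA
  obtain ⟨c₀, hc₀, -, -, hmin⟩ := heff i ⟨c', hc', unassignedBefore_iff.mpr hA⟩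
  obtain rfl : c = c₀ := Option.some_injective _ (h.symm.trans hc₀)
  exact (hmin c' hc' (unassignedBefore_iff.mpr hA)).not_gt hlt

section Exchange

variable [Finite C] {σstar : Fin m → Option C}

theorem FollowsEFF.ncard_sep_insert_le (heff : FollowsEFF b e t σstar) (hσ : IsPolicy b e t σ)
    (ht : Monotone t) {i : Fin m} {cstar c : C} (hstar_i : σstar i = some cstar)
    (hσ_i : σ i = some c)
    (ih : ∀ θ, t i ≤ θ → {c' ∈ assignedBefore σstar i | θ ≤ e c'}.ncard ≤
      {c' ∈ assignedBefore σ i | θ ≤ e c'}.ncard)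
    {θ : ℝ} (hθ : t i ≤ θ) :
    {c' ∈ insert cstar (assignedBefore σstar i) | θ ≤ e c'}.ncard ≤
      {c' ∈ insert c (assignedBefore σ i) | θ ≤ e c'}.ncard := by
  have hc : OnDuty b e c (t i) := hσ.2.1 i c hσ_i
  rcases lt_or_ge (e cstar) θ with hcstar | hcstar
  · rw [Set.sep_insert_of_lt e hcstar]
    exact (ih θ hθ).trans
      (Set.ncard_le_ncard fun c' ⟨hA, hc'⟩ => ⟨Set.mem_insert_of_mem _ hA, hc'⟩)
  rcases le_or_gt θ (e c) with hcθ | hcθ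
  · rw [Set.ncard_sep_insert_of_le e (hσ.notMem_assignedBefore hσ_i) hcθ]
    exact (Set.ncard_sep_insert_le e _ _ _).trans (Nat.add_le_add_right (ih θ hθ) 1)
  -- Now `e c < θ ≤ e cstar`: every crew member on duty at `t i` ending before `θ` was already
  -- used by EFF, `c` among them, whereas `σ` had not used `c`.
  have hband : {c' ∈ assignedBefore σ i | t i ≤ e c' ∧ e c' < θ} ⊂
      {c' ∈ assignedBefore σstar i | t i ≤ e c' ∧ e c' < θ} := by
    rw [Set.ssubset_iff_of_subset]
    · exact ⟨c, ⟨heff.mem_assignedBefore_of_lt hstar_i hc (hcθ.trans_le hcstar), hc.2, hcθ⟩,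
        fun hmem => hσ.notMem_assignedBefore hσ_i hmem.1⟩
    · rintro c' ⟨hA, hτ, hlt⟩
      have hb : b c' ≤ t i := hσ.b_le_of_mem_assignedBefore hA fun j hj => ht hj.le
      exact ⟨heff.mem_assignedBefore_of_lt hstar_i ⟨hb, hτ⟩ (hlt.trans_le hcstar), hτ, hlt⟩
  rw [Set.sep_insert_of_lt e hcθ]
  exact (Set.ncard_sep_insert_le e _ _ _).trans
    (Set.ncard_sep_lt_of_band_ssubset e hθ (ih _ le_rfl) hband)

theorem FollowsEFF.ncard_sep_assignedBefore_le (heff : FollowsEFF b e t σstar)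
    (hstar : IsPolicy b e t σstar) (hσ : IsPolicy b e t σ) (ht : Monotone t) {n : ℕ}
    (hn : n ≤ m) {θ : ℝ} (hθ : ∀ j : Fin m, (j : ℕ) < n → t j ≤ θ) :
    {c ∈ assignedBefore σstar n | θ ≤ e c}.ncard ≤ {c ∈ assignedBefore σ n | θ ≤ e c}.ncard := by
  induction n generalizing θ with
  | zero => simp [assignedBefore_zero]
  | succ n ih =>
    set i : Fin m := ⟨n, hn⟩
    have hθi : t i ≤ θ := hθ i n.lt_succ_self
    have ih_i : ∀ θ, t i ≤ θ → {c ∈ assignedBefore σstar i | θ ≤ e c}.ncard ≤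
        {c ∈ assignedBefore σ i | θ ≤ e c}.ncard :=
      fun θ hθ => ih (n.le_succ.trans hn) fun j hj => (ht (show j ≤ i from hj.le)).trans hθ
    rcases hstar_i : σstar i with _ | cstar
    · rw [assignedBefore_succ_of_eq_none hstar_i]
      refine (ih_i θ hθi).trans (Set.ncard_le_ncard fun c ⟨hA, hc⟩ => ⟨?_, hc⟩)
      exact assignedBefore_mono σ n.le_succ hA
    rw [assignedBefore_succ_of_eq_some hstar_i]
    rcases hσ_i : σ i with _ | c
    · refine Set.ncard_le_ncard fun c ⟨hA, hc⟩ => ⟨?_, hc⟩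
      rw [assignedBefore_succ_of_eq_none hσ_i]
      refine hσ.mem_assignedBefore_of_eq_none hσ_i ⟨?_, hθi.trans hc⟩
      rcases hA with rfl | hA
      · exact (hstar.2.1 i c hstar_i).1
      · exact hstar.b_le_of_mem_assignedBefore hA fun j hj => ht hj.le
    rw [assignedBefore_succ_of_eq_some hσ_i]
    exact heff.ncard_sep_insert_le hσ ht hstar_i hσ_i ih_i hθi

end Exchange

theorem Monotone.exists_forall_le_iff_val_lt {β : Type*} [LinearOrder β] {f : Fin m → β}
    (hf : Monotone f) (u : β) : ∃ n ≤ m, ∀ j : Fin m, f j ≤ u ↔ (j : ℕ) < n := by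
  classical
  have hm_spec : ∀ j : Fin m, m ≤ (j : ℕ) → u < f j := fun j hj => absurd j.isLt hj.not_gt
  have hm : ∃ n, ∀ j : Fin m, n ≤ (j : ℕ) → u < f j := ⟨m, hm_spec⟩
  refine ⟨Nat.find hm, Nat.find_min' hm hm_spec, fun j => ⟨fun hj => ?_, fun hj => ?_⟩⟩
  · by_contra hn
    exact (Nat.find_spec hm j (not_lt.mp hn)).not_ge hj
  · obtain ⟨k, hjk, hk⟩ : ∃ k : Fin m, (j : ℕ) ≤ k ∧ f k ≤ u := by
      simpa using Nat.find_min hm hj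
    exact (hf (show j ≤ k from hjk)).trans hk

theorem IsPolicy.nAvail_eq [Finite C] (hσ : IsPolicy b e t σ) {u : ℝ} {n : ℕ}
    (hn : ∀ j : Fin m, t j ≤ u ↔ (j : ℕ) < n) :
    NAvail b e t σ u = {c | OnDuty b e c u}.ncard - {c ∈ assignedBefore σ n | u ≤ e c}.ncard := by
  have hsub : {c ∈ assignedBefore σ n | u ≤ e c} ⊆ {c | OnDuty b e c u} := fun c ⟨hA, hu⟩ =>
    ⟨hσ.b_le_of_mem_assignedBefore hA fun j => (hn j).mpr, hu⟩
  rw [NAvail, ← Set.ncard_sdiff hsub]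
  congr 1
  ext c
  simp only [Set.mem_sdiff, Set.mem_ofPred_eq, not_and, assignedBefore]
  refine and_congr_right fun hc => ⟨fun h ⟨j, hj, hjc⟩ _ => (h j hjc).not_ge ((hn j).mpr hj),
    fun h j hjc => lt_of_not_ge fun hj => h ⟨j, (hn j).mp hj, hjc⟩ hc.2⟩

end

theorem eff_policy_optimal_general
    {C : Type*} [Fintype C] (b e : C → ℝ)
    {m : ℕ} (t : Fin m → ℝ) (ht : Monotone t)
    (σstar σ : Fin m → Option C)
    (hstar : IsPolicy b e t σstar) (heff : FollowsEFF b e t σstar)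
    (hσ : IsPolicy b e t σ) :
    ∀ u : ℝ, NAvail b e t σ u ≤ NAvail b e t σstar u := by
  intro u
  obtain ⟨n, hnm, hn⟩ := ht.exists_forall_le_iff_val_lt u
  rw [hσ.nAvail_eq hn, hstar.nAvail_eq hn]
  exact Nat.sub_le_sub_left
    (heff.ncard_sep_assignedBefore_le hstar hσ ht hnm fun j => (hn j).mpr) _

/-- Proposition 1 (optimality of the EFF recovery policy, pathwise form):
any policy following the EFF rule keeps at least as many reserve crew members
available as any other recovery policy, at every point in time. -/
theorem eff_policy_optimal
    {C : Type*} [Fintype C] (b e : C → ℝ) (hbe : ∀ c, b c ≤ e c)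
    {m : ℕ} (t : Fin m → ℝ) (ht : Monotone t)
    (σstar σ : Fin m → Option C)
    (hstar : IsPolicy b e t σstar) (heff : FollowsEFF b e t σstar)
    (hσ : IsPolicy b e t σ) :
    ∀ u : ℝ, NAvail b e t σ u ≤ NAvail b e t σstar u :=
  eff_policy_optimal_general b e t ht σstar σ hstar heff hσ
end

section
/- EFF minimizes unserved demands (flight cancellations): with the reserve-crew setup, let σ* be any recovery policy that follows the EFF rule and σ be any recovery policy. Then every demand served by σ is served by σ*: for every i, σ(i) ≠ none implies σ*(i) ≠ none. Consequently, the number of unserved demands under σ*, #{i : σ*(i) = none}, is at most the number of unserved demands under σ. -/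
/-- EFF minimizes unserved demands (flight cancellations): every demand served
by an arbitrary policy `σ` is also served by an EFF policy `σ*`; consequently the
number of unserved demands under `σ*` is at most that under `σ`. -/
theorem eff_minimizes_cancellations
    {C : Type*} [Fintype C] (b e : C → ℝ) (hbe : ∀ c, b c ≤ e c)
    {m : ℕ} (t : Fin m → ℝ) (ht : Monotone t)
    (σstar σ : Fin m → Option C)
    (hstar : IsPolicy b e t σstar) (heff : FollowsEFF b e t σstar)
    (hσ : IsPolicy b e t σ) :
    (∀ i : Fin m, σ i ≠ none → σstar i ≠ none) ∧
    Set.ncard {i : Fin m | σstar i = none} ≤ Set.ncard {i : Fin m | σ i = none} := by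
  classical
  -- Key invariant: an injection from σ-available crew into σstar-available crew,
  -- nondecreasing on end times.
  have key : ∀ k (hk : k < m), ∃ ψ : C → C,
      (∀ c, OnDuty b e c (t ⟨k, hk⟩) → UnassignedBefore σ ⟨k, hk⟩ c →
        OnDuty b e (ψ c) (t ⟨k, hk⟩) ∧ UnassignedBefore σstar ⟨k, hk⟩ (ψ c) ∧ e c ≤ e (ψ c)) ∧
      (∀ c c', OnDuty b e c (t ⟨k, hk⟩) → UnassignedBefore σ ⟨k, hk⟩ c →
        OnDuty b e c' (t ⟨k, hk⟩) → UnassignedBefore σ ⟨k, hk⟩ c' → ψ c = ψ c' → c = c') := by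
    intro k
    induction k with
    | zero =>
      intro hk
      refine ⟨id, fun c hc _ => ⟨hc, fun j hj => absurd hj (by simp [Fin.lt_def]), le_rfl⟩,
        fun c c' _ _ _ _ h => h⟩
    | succ k ih =>
      intro hk
      have hk' : k < m := Nat.lt_of_succ_lt hk
      obtain ⟨ψ, hψ1, hψ2⟩ := ih hk'
      set i : Fin m := ⟨k, hk'⟩ with hi
      set i' : Fin m := ⟨k + 1, hk⟩ with hi'
      have hii' : i ≤ i' := by simp [Fin.le_def, hi, hi']
      have htii' : t i ≤ t i' := ht hii'
      have split : ∀ (τ : Fin m → Option C) (c : C),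
          UnassignedBefore τ i' c ↔ (UnassignedBefore τ i c ∧ τ i ≠ some c) := by
        intro τ c
        constructor
        · intro h
          refine ⟨fun j hj => h j ?_, h i (by simp [Fin.lt_def, hi, hi'])⟩
          · have : j.val < k := by simpa [Fin.lt_def, hi] using hj
            simp [Fin.lt_def, hi']; omega
        · rintro ⟨h1, h2⟩ j hj
          have hj' : j.val < k + 1 := by simpa [Fin.lt_def, hi'] using hj
          rcases Nat.lt_succ_iff_lt_or_eq.mp hj' with h | h
          · exact h1 j (by simp [Fin.lt_def, hi, h])
          · have : j = i := Fin.ext (by simpa [hi] using h)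
            rw [this]; exact h2
      -- a crew on-duty at t i' but assigned before i' by σstar must have started by t i
      have hnewfree : ∀ c : C, t i < b c → UnassignedBefore σstar i' c := by
        intro c hbc j hj hjc
        have hod := hstar.2.1 j c hjc
        have hji : j ≤ i := by
          have : j.val < k + 1 := by simpa [Fin.lt_def, hi'] using hj
          simp [Fin.le_def, hi]; omega
        have : t j ≤ t i := ht hji
        have := hod.1
        linarith
      -- a crew available at i' but not at i must start after t i
      have hnew : ∀ c : C, OnDuty b e c (t i') → UnassignedBefore σ i c →
          ¬ OnDuty b e c (t i) → t i < b c := by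
        intro c hc _ hnod
        by_contra hle
        push_neg at hle
        exact hnod ⟨hle, le_trans htii' hc.2⟩
      rcases hB : σ i with _ | cσ
      · -- σ i = none : σ-available set at i is empty
        have hempty : ∀ c : C, ¬ (OnDuty b e c (t i) ∧ UnassignedBefore σ i c) := by
          intro c hc
          exact hσ.2.2 i hB ⟨c, hc⟩
        refine ⟨id, ?_, fun c c' _ _ _ _ h => h⟩
        intro c hc hu
        have hu2 := (split σ c).mp hu
        have hnod : ¬ OnDuty b e c (t i) := fun h => hempty c ⟨h, hu2.1⟩
        have hbc := hnew c hc hu2.1 hnod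
        exact ⟨hc, hnewfree c hbc, le_rfl⟩
      · -- σ i = some cσ
        have hcσ_od : OnDuty b e cσ (t i) := hσ.2.1 i cσ hB
        have hcσ_un : UnassignedBefore σ i cσ := by
          intro j hj hjc
          exact absurd (hσ.1 j i cσ hjc hB) (ne_of_lt hj)
        obtain ⟨hψcσ_od, hψcσ_un, hψcσ_e⟩ := hψ1 cσ hcσ_od hcσ_un
        obtain ⟨cst, hcst_eq, hcst_od, hcst_un, hcst_min⟩ :=
          heff i ⟨ψ cσ, hψcσ_od, hψcσ_un⟩
        refine ⟨fun c => if OnDuty b e c (t i) ∧ UnassignedBefore σ i c then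
            (if ψ c = cst then ψ cσ else ψ c) else c, ?_, ?_⟩
        · intro c hc hu
          have hu2 := (split σ c).mp hu
          have hcne : c ≠ cσ := fun h => hu2.2 (by rw [h]; exact hB)
          by_cases hin : OnDuty b e c (t i) ∧ UnassignedBefore σ i c
          · obtain ⟨hod, hun, he⟩ := hψ1 c hin.1 hin.2
            by_cases hcc : ψ c = cst
            · have hne : ψ cσ ≠ cst := fun h =>
                hcne (hψ2 c cσ hin.1 hin.2 hcσ_od hcσ_un (hcc.trans h.symm))
              have hecst : e c ≤ e cst := hcc ▸ he
              have hemin : e cst ≤ e (ψ cσ) := hcst_min _ hψcσ_od hψcσ_un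
              simp only [if_pos hin, if_pos hcc]
              refine ⟨⟨le_trans hψcσ_od.1 htii', le_trans hc.2 (le_trans hecst hemin)⟩, ?_,
                le_trans hecst hemin⟩
              refine (split σstar _).mpr ⟨hψcσ_un, fun h => hne ?_⟩
              rw [hcst_eq] at h
              exact (Option.some.inj h).symm
            · simp only [if_pos hin, if_neg hcc]
              refine ⟨⟨le_trans hod.1 htii', le_trans hc.2 he⟩, ?_, he⟩
              refine (split σstar _).mpr ⟨hun, fun h => hcc ?_⟩
              rw [hcst_eq] at h
              exact (Option.some.inj h).symm
          · simp only [if_neg hin]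
            have hnod : ¬ OnDuty b e c (t i) := fun h => hin ⟨h, hu2.1⟩
            have hbc := hnew c hc hu2.1 hnod
            exact ⟨hc, hnewfree c hbc, le_rfl⟩
        · intro c c' hc hu hc' hu' heq
          have hu2 := (split σ c).mp hu
          have hu2' := (split σ c').mp hu'
          by_cases hin : OnDuty b e c (t i) ∧ UnassignedBefore σ i c <;>
            by_cases hin' : OnDuty b e c' (t i) ∧ UnassignedBefore σ i c'
          · -- both old
            simp only [if_pos hin, if_pos hin'] at heq
            have hcne : c ≠ cσ := fun h => hu2.2 (by rw [h]; exact hB)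
            have hcne' : c' ≠ cσ := fun h => hu2'.2 (by rw [h]; exact hB)
            by_cases hcc : ψ c = cst <;> by_cases hcc' : ψ c' = cst
            · exact hψ2 c c' hin.1 hin.2 hin'.1 hin'.2 (hcc.trans hcc'.symm)
            · rw [if_pos hcc, if_neg hcc'] at heq
              exact absurd (hψ2 cσ c' hcσ_od hcσ_un hin'.1 hin'.2 heq).symm hcne'
            · rw [if_neg hcc, if_pos hcc'] at heq
              exact absurd (hψ2 c cσ hin.1 hin.2 hcσ_od hcσ_un heq) hcne
            · rw [if_neg hcc, if_neg hcc'] at heq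
              exact hψ2 c c' hin.1 hin.2 hin'.1 hin'.2 heq
          · -- c old, c' new
            exfalso
            have hnod' : ¬ OnDuty b e c' (t i) := fun h => hin' ⟨h, hu2'.1⟩
            have hbc' := hnew c' hc' hu2'.1 hnod'
            simp only [if_pos hin, if_neg hin'] at heq
            have hble : b (if ψ c = cst then ψ cσ else ψ c) ≤ t i := by
              by_cases hcc : ψ c = cst
              · rw [if_pos hcc]; exact hψcσ_od.1
              · rw [if_neg hcc]; exact (hψ1 c hin.1 hin.2).1.1
            rw [heq] at hble
            linarith
          · -- c new, c' old
            exfalso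
            have hnod : ¬ OnDuty b e c (t i) := fun h => hin ⟨h, hu2.1⟩
            have hbc := hnew c hc hu2.1 hnod
            simp only [if_neg hin, if_pos hin'] at heq
            have hble : b (if ψ c' = cst then ψ cσ else ψ c') ≤ t i := by
              by_cases hcc : ψ c' = cst
              · rw [if_pos hcc]; exact hψcσ_od.1
              · rw [if_neg hcc]; exact (hψ1 c' hin'.1 hin'.2).1.1
            rw [← heq] at hble
            linarith
          · simpa only [if_neg hin, if_neg hin'] using heq
      -- end cases
  have main : ∀ i : Fin m, σ i ≠ none → σstar i ≠ none := by
    rintro ⟨iv, hiv⟩ hi hnone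
    rcases hc : σ ⟨iv, hiv⟩ with _ | c
    · exact hi hc
    have hod := hσ.2.1 ⟨iv, hiv⟩ c hc
    have hun : UnassignedBefore σ ⟨iv, hiv⟩ c := by
      intro j hj hjc
      exact absurd (hσ.1 j ⟨iv, hiv⟩ c hjc hc) (ne_of_lt hj)
    obtain ⟨ψ, hψ1, _⟩ := key iv hiv
    obtain ⟨h1, h2, _⟩ := hψ1 c hod hun
    exact hstar.2.2 ⟨iv, hiv⟩ hnone ⟨ψ c, h1, h2⟩
  refine ⟨main, Set.ncard_le_ncard ?_ (Set.toFinite _)⟩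
  intro i hi
  by_contra h'
  exact main i h' hi
end
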